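/- Let f : ℝ^d → ℝ be convex with L-Lipschitz gradient and minimizer x*. Fix γ ∈ [0,1), set α = 1/L, c_t = 1 + γ/(4(1-γ)) + t/4, β_t = (c_t - γ c_{t+1})/(1 + (1-γ) c_{t+1}), q_t = 1 + (1-γ)c_{t+1}, a_{t+1} = c_t q_t²/(c_t - γ c_{t+1}) for t ≥ 0, and a_0 = a_1. Run EMA-Nesterov with gradient-descent base step and define Φ_t = (a_t/L)(f(x^t) - f(x*)) + (1/2)‖x^t + c_t m^t - x*‖². Then for every t ≥ 0, Φ_{t+1} ≤ Φ_t. -/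

import Mathlib

/-!
With `y = x + β m`, `g = ∇f(y)` and `z = x + c m - x*`, the EMA update gives
`z⁺ = z - (q/L) g`. Split the weight `a⁺ = (a⁺ - q) + q`: convexity of `f` between `y` and `x`
(weight `a⁺ - q`) and between `y` and `x*` (weight `q`), together with the descent lemma for the
gradient step, bound `Φ⁺`. The cross terms in `⟪g, m⟫` cancel because `a⁺ β = c q`, the `‖g‖²`
term has coefficient `(q² - a⁺)/(2L²) ≤ 0`, and the remaining weight `a⁺ - q` on `f(x) - f(x*)`
is at most `a`.
-/

open Set
open scoped Gradient RealInnerProductSpace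

section Smooth

variable {E : Type*} [NormedAddCommGroup E] [InnerProductSpace ℝ E] [CompleteSpace E]
  {f : E → ℝ}

theorem hasDerivAt_comp_add_smul {z v : E} {s : ℝ} (hf : DifferentiableAt ℝ f (z + s • v)) :
    HasDerivAt (fun s : ℝ => f (z + s • v)) ⟪∇ f (z + s • v), v⟫ s := by
  rw [inner_gradient_left]
  exact hf.hasFDerivAt.comp_hasDerivAt s
    (by simpa using ((hasDerivAt_id s).smul_const v).const_add z)

theorem ConvexOn.add_inner_gradient_le (hconv : ConvexOn ℝ univ f) {z : E}
    (hf : DifferentiableAt ℝ f z) (w : E) : f z + ⟪∇ f z, w - z⟫ ≤ f w := by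
  have hφ : ConvexOn ℝ univ (fun s : ℝ => f (z + s • (w - z))) := by
    simpa [Function.comp_def, AffineMap.lineMap_apply, add_comm] using
      hconv.comp_affineMap (AffineMap.lineMap z w)
  have hd : HasDerivAt (fun s : ℝ => f (z + s • (w - z))) ⟪∇ f z, w - z⟫ 0 := by
    simpa using hasDerivAt_comp_add_smul (s := 0) (v := w - z) (by simpa using hf)
  have := hφ.deriv_le_slope (mem_univ 0) (mem_univ 1) one_pos hd.differentiableAt
  rw [hd.deriv, slope_def_field] at this
  simp only [zero_smul, add_zero, one_smul, add_sub_cancel, sub_zero, div_one] at this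
  linarith

theorem le_add_inner_gradient_add_sq_of_lipschitz {L : ℝ} (hf : Differentiable ℝ f)
    (hlip : ∀ z w, ‖∇ f z - ∇ f w‖ ≤ L * ‖z - w‖) (z w : E) :
    f w ≤ f z + ⟪∇ f z, w - z⟫ + L / 2 * ‖w - z‖ ^ 2 := by
  set v := w - z
  have hgap : ∀ s : ℝ, HasDerivAt (fun s : ℝ => f (z + s • v) - f z - s * ⟪∇ f z, v⟫)
      (⟪∇ f (z + s • v), v⟫ - ⟪∇ f z, v⟫) s := fun s =>
    ((hasDerivAt_comp_add_smul (hf _)).sub_const (f z)).sub (hasDerivAt_mul_const _)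
  have hbound : ∀ s : ℝ, HasDerivAt (fun s : ℝ => L / 2 * s ^ 2 * ‖v‖ ^ 2)
      (L * s * ‖v‖ ^ 2) s := fun s =>
    (((hasDerivAt_pow 2 s).const_mul (L / 2)).mul_const (‖v‖ ^ 2)).congr_deriv
      (by rw [Nat.add_one_sub_one, pow_one]; push_cast; ring)
  have key := image_le_of_deriv_right_le_deriv_boundary
    (fun s _ => (hgap s).continuousAt.continuousWithinAt)
    (fun s _ => (hgap s).hasDerivWithinAt) (by simp)
    (fun s _ => (hbound s).continuousAt.continuousWithinAt)
    (fun s _ => (hbound s).hasDerivWithinAt) (fun s hs => ?_) (right_mem_Icc.2 zero_le_one)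
  · simp only [one_smul, one_mul, one_pow, mul_one, v, add_sub_cancel] at key
    linarith
  · calc ⟪∇ f (z + s • v), v⟫ - ⟪∇ f z, v⟫ = ⟪∇ f (z + s • v) - ∇ f z, v⟫ :=
          (inner_sub_left _ _ _).symm
      _ ≤ ‖∇ f (z + s • v) - ∇ f z‖ * ‖v‖ := real_inner_le_norm _ _
      _ ≤ L * ‖s • v‖ * ‖v‖ := by
          simpa using mul_le_mul_of_nonneg_right (hlip (z + s • v) z) (norm_nonneg v)
      _ = L * s * ‖v‖ ^ 2 := by rw [norm_smul, Real.norm_of_nonneg hs.1]; ring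

theorem le_sub_sq_norm_gradient_of_lipschitz {L : ℝ} (hf : Differentiable ℝ f)
    (hlip : ∀ z w, ‖∇ f z - ∇ f w‖ ≤ L * ‖z - w‖) (y : E) :
    f (y - (1 / L) • ∇ f y) ≤ f y - 1 / (2 * L) * ‖∇ f y‖ ^ 2 := by
  rcases eq_or_ne L 0 with rfl | hL
  · simp
  have h := le_add_inner_gradient_add_sq_of_lipschitz hf hlip y (y - (1 / L) • ∇ f y)
  rw [sub_sub_cancel_left, inner_neg_right, real_inner_smul_right, real_inner_self_eq_norm_sq,
    norm_neg, norm_smul, Real.norm_eq_abs, mul_pow, sq_abs] at h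
  convert h using 1
  field_simp
  ring

theorem lyapunov_gradient_step_le {L : ℝ} (hL : 0 < L) (hf : Differentiable ℝ f)
    (hconv : ConvexOn ℝ univ f) (hlip : ∀ z w, ‖∇ f z - ∇ f w‖ ≤ L * ‖z - w‖)
    {xstar : E} (hmin : ∀ z, f xstar ≤ f z) {A A' β c q : ℝ} (hq : 1 ≤ q) (hqA' : q ^ 2 ≤ A')
    (hA : A' - q ≤ A) (hβ : A' * β = c * q) (x m : E) :
    A' / L * (f (x + β • m - (1 / L) • ∇ f (x + β • m)) - f xstar)
        + 1 / 2 * ‖x + c • m - (q / L) • ∇ f (x + β • m) - xstar‖ ^ 2 ≤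
      A / L * (f x - f xstar) + 1 / 2 * ‖x + c • m - xstar‖ ^ 2 := by
  set y := x + β • m
  set g := ∇ f y
  have hdescent := le_sub_sq_norm_gradient_of_lipschitz hf hlip y
  have hy_x : f y + ⟪g, x - y⟫ ≤ f x := hconv.add_inner_gradient_le (hf y) x
  have hy_xstar : f y + ⟪g, xstar - y⟫ ≤ f xstar := hconv.add_inner_gradient_le (hf y) xstar
  have hx_y : x - y = -(β • m) := by simp [y]
  have hxstar_y : xstar - y = -(y - xstar) := (neg_sub _ _).symm
  have hz : x + c • m - xstar = (y - xstar) + (c - β) • m := by simp only [y]; module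
  rw [hx_y, inner_neg_right, real_inner_smul_right, real_inner_comm] at hy_x
  rw [hxstar_y, inner_neg_right, real_inner_comm] at hy_xstar
  rw [sub_right_comm, norm_sub_sq_real, real_inner_smul_right, norm_smul, Real.norm_eq_abs,
    mul_pow, sq_abs, hz, inner_add_left, real_inner_smul_left]
  have hA'q : 0 ≤ A' - q := by nlinarith
  linear_combination
    mul_le_mul_of_nonneg_left hdescent (div_nonneg (by linarith : 0 ≤ A') hL.le)
    + mul_le_mul_of_nonneg_left hy_x (div_nonneg hA'q hL.le)
    + mul_le_mul_of_nonneg_left hy_xstar (div_nonneg (by linarith : 0 ≤ q) hL.le)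
    + mul_le_mul_of_nonneg_left (hmin x) (div_nonneg (by linarith : 0 ≤ A - (A' - q)) hL.le)
    + mul_nonneg (div_nonneg (sub_nonneg.2 hqA') (by positivity : (0:ℝ) ≤ 2 * L ^ 2))
        (sq_nonneg ‖g‖)
    + (⟪m, g⟫ / L) * hβ

end Smooth

theorem ema_momentum_step_identity {R M : Type*} [CommRing R] [AddCommGroup M] [Module R M]
    {x m g x' m' : M} {α β γ c c' q : R} (hq : q = 1 + (1 - γ) * c') (hc : c = q * β + γ * c')
    (hx' : x' = x + β • m - α • g) (hm' : m' = γ • m + (1 - γ) • (x' - x)) :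
    x' + c' • m' = x + c • m - (α * q) • g := by
  subst hx' hm' hc hq
  module

-- `a (t + 1)` in closed form, with `u = 1 - γ` and `T = t`.
noncomputable def emaWeight (u T : ℝ) : ℝ :=
  (1 + 3 * u + u * T) * (5 + 4 * u + u * T) ^ 2 / (16 * u ^ 2 * (4 + T))

theorem emaWeight_add_one_sub_le {u T : ℝ} (hu : 0 < u) (hu1 : u ≤ 1) (hT : 0 ≤ T) :
    emaWeight u (T + 1) - emaWeight u T ≤ (5 + 4 * u + u * (T + 1)) / 4 := by
  unfold emaWeight
  rw [div_sub_div _ _ (by positivity) (by positivity),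
    div_le_div_iff₀ (by positivity) (by norm_num)]
  have hP : 0 ≤ 64 * u ^ 2 * (25 - 25 * u + 108 * u ^ 2 + 63 * u ^ 2 * (T + 1)
      + 9 * u ^ 2 * (T + 1) ^ 2 + 120 * u ^ 3 + 94 * u ^ 3 * (T + 1) + 24 * u ^ 3 * (T + 1) ^ 2
      + 2 * u ^ 3 * (T + 1) ^ 3) := by
    have : 0 ≤ 25 - 25 * u := by linarith
    positivity
  nlinarith [hP]

namespace EmaNesterov

variable {γ : ℝ} {c β q a : ℕ → ℝ}

theorem c_pos (hγ0 : 0 ≤ γ) (hγ1 : γ < 1)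
    (hc : ∀ t : ℕ, c t = 1 + γ / (4 * (1 - γ)) + (t : ℝ) / 4) (t : ℕ) : 0 < c t := by
  have : 0 ≤ γ / (4 * (1 - γ)) := div_nonneg hγ0 (by linarith)
  rw [hc]
  positivity

theorem c_sub_mul_c_succ (hγ1 : γ ≠ 1)
    (hc : ∀ t : ℕ, c t = 1 + γ / (4 * (1 - γ)) + (t : ℝ) / 4) (t : ℕ) :
    c t - γ * c (t + 1) = (1 - γ) * (4 + t) / 4 := by
  have : 1 - γ ≠ 0 := sub_ne_zero.2 hγ1.symm
  rw [hc, hc]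
  push_cast
  field_simp
  ring

theorem c_sub_mul_c_succ_pos (hγ1 : γ < 1)
    (hc : ∀ t : ℕ, c t = 1 + γ / (4 * (1 - γ)) + (t : ℝ) / 4) (t : ℕ) :
    0 < c t - γ * c (t + 1) := by
  have := sub_pos.2 hγ1
  rw [c_sub_mul_c_succ hγ1.ne hc]
  positivity

theorem one_le_q (hγ0 : 0 ≤ γ) (hγ1 : γ < 1)
    (hc : ∀ t : ℕ, c t = 1 + γ / (4 * (1 - γ)) + (t : ℝ) / 4)
    (hq : ∀ t : ℕ, q t = 1 + (1 - γ) * c (t + 1)) (t : ℕ) : 1 ≤ q t := by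
  have := mul_pos (sub_pos.2 hγ1) (c_pos hγ0 hγ1 hc (t + 1))
  rw [hq]
  linarith

theorem c_eq_q_mul_β_add (hγ0 : 0 ≤ γ) (hγ1 : γ < 1)
    (hc : ∀ t : ℕ, c t = 1 + γ / (4 * (1 - γ)) + (t : ℝ) / 4)
    (hβ : ∀ t : ℕ, β t = (c t - γ * c (t + 1)) / (1 + (1 - γ) * c (t + 1)))
    (hq : ∀ t : ℕ, q t = 1 + (1 - γ) * c (t + 1)) (t : ℕ) :
    c t = q t * β t + γ * c (t + 1) := by
  have hq0 := (zero_lt_one.trans_le (one_le_q hγ0 hγ1 hc hq t)).ne'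
  rw [hβ, ← hq, mul_div_cancel₀ _ hq0]
  ring

theorem a_succ_mul_β (hγ0 : 0 ≤ γ) (hγ1 : γ < 1)
    (hc : ∀ t : ℕ, c t = 1 + γ / (4 * (1 - γ)) + (t : ℝ) / 4)
    (hβ : ∀ t : ℕ, β t = (c t - γ * c (t + 1)) / (1 + (1 - γ) * c (t + 1)))
    (hq : ∀ t : ℕ, q t = 1 + (1 - γ) * c (t + 1))
    (ha : ∀ t : ℕ, a (t + 1) = c t * q t ^ 2 / (c t - γ * c (t + 1))) (t : ℕ) :
    a (t + 1) * β t = c t * q t := by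
  have hq0 := (zero_lt_one.trans_le (one_le_q hγ0 hγ1 hc hq t)).ne'
  have hs := (c_sub_mul_c_succ_pos hγ1 hc t).ne'
  rw [ha, hβ, ← hq]
  field_simp

theorem q_sq_le_a_succ (hγ0 : 0 ≤ γ) (hγ1 : γ < 1)
    (hc : ∀ t : ℕ, c t = 1 + γ / (4 * (1 - γ)) + (t : ℝ) / 4)
    (ha : ∀ t : ℕ, a (t + 1) = c t * q t ^ 2 / (c t - γ * c (t + 1))) (t : ℕ) :
    q t ^ 2 ≤ a (t + 1) := by
  have := mul_nonneg hγ0 (c_pos hγ0 hγ1 hc (t + 1)).le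
  rw [ha, le_div_iff₀ (c_sub_mul_c_succ_pos hγ1 hc t)]
  nlinarith [sq_nonneg (q t)]

theorem a_succ_eq_emaWeight (hγ1 : γ < 1)
    (hc : ∀ t : ℕ, c t = 1 + γ / (4 * (1 - γ)) + (t : ℝ) / 4)
    (hq : ∀ t : ℕ, q t = 1 + (1 - γ) * c (t + 1))
    (ha : ∀ t : ℕ, a (t + 1) = c t * q t ^ 2 / (c t - γ * c (t + 1))) (t : ℕ) :
    a (t + 1) = emaWeight (1 - γ) t := by
  have hu : 1 - γ ≠ 0 := (sub_pos.2 hγ1).ne'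
  have : (4 + t : ℝ) ≠ 0 := by positivity
  rw [ha, c_sub_mul_c_succ hγ1.ne hc, hq, hc, hc, emaWeight]
  push_cast
  field_simp
  ring

theorem a_succ_sub_q_le (hγ0 : 0 ≤ γ) (hγ1 : γ < 1)
    (hc : ∀ t : ℕ, c t = 1 + γ / (4 * (1 - γ)) + (t : ℝ) / 4)
    (hq : ∀ t : ℕ, q t = 1 + (1 - γ) * c (t + 1))
    (ha : ∀ t : ℕ, a (t + 1) = c t * q t ^ 2 / (c t - γ * c (t + 1))) (ha0 : a 0 = a 1) :
    ∀ t : ℕ, a (t + 1) - q t ≤ a t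
  | 0 => by linarith [ha0, one_le_q hγ0 hγ1 hc hq 0]
  | t + 1 => by
    have hqt : q (t + 1) = (5 + 4 * (1 - γ) + (1 - γ) * ((t : ℝ) + 1)) / 4 := by
      have : 1 - γ ≠ 0 := (sub_pos.2 hγ1).ne'
      rw [hq, hc]
      push_cast
      field_simp
      ring
    rw [a_succ_eq_emaWeight hγ1 hc hq ha, a_succ_eq_emaWeight hγ1 hc hq ha, hqt]
    push_cast
    linarith [emaWeight_add_one_sub_le (sub_pos.2 hγ1) (by linarith : 1 - γ ≤ 1)
      (Nat.cast_nonneg' t)]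

end EmaNesterov

theorem ema_nesterov_lyapunov_decrease_convex_general
    (d : ℕ) (f : EuclideanSpace ℝ (Fin d) → ℝ)
    (L : ℝ) (hL : 0 < L)
    (hdiff : Differentiable ℝ f)
    (hconv : ConvexOn ℝ Set.univ f)
    (hlip : ∀ z w, ‖gradient f z - gradient f w‖ ≤ L * ‖z - w‖)
    (xstar : EuclideanSpace ℝ (Fin d)) (hmin : ∀ z, f xstar ≤ f z)
    (γ : ℝ) (hγ0 : 0 ≤ γ) (hγ1 : γ < 1)
    (α : ℝ) (hα : α = 1 / L)
    (c β q a : ℕ → ℝ)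
    (hc : ∀ t : ℕ, c t = 1 + γ / (4 * (1 - γ)) + (t : ℝ) / 4)
    (hβ : ∀ t : ℕ, β t = (c t - γ * c (t + 1)) / (1 + (1 - γ) * c (t + 1)))
    (hq : ∀ t : ℕ, q t = 1 + (1 - γ) * c (t + 1))
    (ha : ∀ t : ℕ, a (t + 1) = c t * q t ^ 2 / (c t - γ * c (t + 1)))
    (ha0 : a 0 = a 1)
    (x m : ℕ → EuclideanSpace ℝ (Fin d))
    (hx : ∀ t, x (t + 1) = (x t + β t • m t) - α • gradient f (x t + β t • m t))
    (hm : ∀ t, m (t + 1) = γ • m t + (1 - γ) • (x (t + 1) - x t)) :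
    ∀ t : ℕ,
      a (t + 1) / L * (f (x (t + 1)) - f xstar)
          + 1 / 2 * ‖x (t + 1) + c (t + 1) • m (t + 1) - xstar‖ ^ 2 ≤
        a t / L * (f (x t) - f xstar) + 1 / 2 * ‖x t + c t • m t - xstar‖ ^ 2 := by
  intro t
  subst hα
  rw [ema_momentum_step_identity (hq t) (EmaNesterov.c_eq_q_mul_β_add hγ0 hγ1 hc hβ hq t)
    (hx t) (hm t), hx t, one_div_mul_eq_div L (q t)]
  exact lyapunov_gradient_step_le hL hdiff hconv hlip hmin
    (EmaNesterov.one_le_q hγ0 hγ1 hc hq t) (EmaNesterov.q_sq_le_a_succ hγ0 hγ1 hc ha t)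
    (EmaNesterov.a_succ_sub_q_le hγ0 hγ1 hc hq ha ha0 t)
    (EmaNesterov.a_succ_mul_β hγ0 hγ1 hc hβ hq ha t) (x t) (m t)

/-- monotonicity `Φ_{t+1} ≤ Φ_t` of the Lyapunov function for EMA-Nesterov
with gradient-descent base step on a convex `L`-smooth objective. -/
theorem ema_nesterov_lyapunov_decrease_convex
    (d : ℕ) (f : EuclideanSpace ℝ (Fin d) → ℝ)
    (L : ℝ) (hL : 0 < L)
    (hdiff : Differentiable ℝ f)
    (hconv : ConvexOn ℝ Set.univ f)
    (hlip : ∀ z w, ‖gradient f z - gradient f w‖ ≤ L * ‖z - w‖)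
    (xstar : EuclideanSpace ℝ (Fin d)) (hmin : ∀ z, f xstar ≤ f z)
    (γ : ℝ) (hγ0 : 0 ≤ γ) (hγ1 : γ < 1)
    (α : ℝ) (hα : α = 1 / L)
    (c β q a : ℕ → ℝ)
    (hc : ∀ t : ℕ, c t = 1 + γ / (4 * (1 - γ)) + (t : ℝ) / 4)
    (hβ : ∀ t : ℕ, β t = (c t - γ * c (t + 1)) / (1 + (1 - γ) * c (t + 1)))
    (hq : ∀ t : ℕ, q t = 1 + (1 - γ) * c (t + 1))
    (ha : ∀ t : ℕ, a (t + 1) = c t * q t ^ 2 / (c t - γ * c (t + 1)))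
    (ha0 : a 0 = a 1)
    (x m : ℕ → EuclideanSpace ℝ (Fin d))
    (hm0 : m 0 = 0)
    (hx : ∀ t, x (t + 1) = (x t + β t • m t) - α • gradient f (x t + β t • m t))
    (hm : ∀ t, m (t + 1) = γ • m t + (1 - γ) • (x (t + 1) - x t)) :
    ∀ t : ℕ,
      a (t + 1) / L * (f (x (t + 1)) - f xstar)
          + 1 / 2 * ‖x (t + 1) + c (t + 1) • m (t + 1) - xstar‖ ^ 2 ≤
        a t / L * (f (x t) - f xstar) + 1 / 2 * ‖x t + c t • m t - xstar‖ ^ 2 :=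
  ema_nesterov_lyapunov_decrease_convex_general d f L hL hdiff hconv hlip xstar hmin γ hγ0 hγ1 α hα
    c β q a hc hβ hq ha ha0 x m hx hm
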